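/- arXiv:1305.0956 — 3 statements merged into one kernel-verified Lean document; each statement's English description precedes it below -/
import Mathlib

section
/- Let G be a locally finite group all of whose proper subgroups are finite, and suppose G is infinite and abelian. Then G is a quasicyclic (Prüfer) q-group for some prime q. -/
/-- The Prüfer (quasicyclic) `q`-group, realized as the subgroup of `ℚ/ℤ` (here
`AddCircle (1 : ℚ)`) consisting of the elements of `q`-power order. -/
def pruferAddSubgroup (q : ℕ) : AddSubgroup (AddCircle (1 : ℚ)) where
  carrier := {x | ∃ n : ℕ, q ^ n • x = 0}
  zero_mem' := ⟨0, smul_zero _⟩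
  add_mem' := by
    rintro a b ⟨n, hn⟩ ⟨m, hm⟩
    refine ⟨n + m, ?_⟩
    rw [smul_add, pow_add, mul_smul, smul_comm (q ^ n) (q ^ m) a, hn, smul_zero, mul_comm,
      mul_smul, smul_comm (q ^ m) (q ^ n) b, hm, smul_zero, zero_add]
  neg_mem' := by
    rintro a ⟨n, hn⟩
    exact ⟨n, by rw [smul_neg, hn, neg_zero]⟩

noncomputable section

namespace PruferAux

variable (q : ℕ)

/-- the canonical generator `1/q^n` in `ℚ/ℤ`. -/
def u (n : ℕ) : AddCircle (1 : ℚ) := (((q : ℚ) ^ n)⁻¹ : ℚ)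

variable {q}

lemma pow_smul_u (hq : 0 < q) (n : ℕ) : (q ^ n : ℕ) • u q n = 0 := by
  rw [u, ← AddCircle.coe_nsmul]
  have : (q ^ n : ℕ) • (((q : ℚ) ^ n)⁻¹ : ℚ) = 1 := by
    rw [nsmul_eq_mul]; push_cast; field_simp
  rw [this]
  exact AddCircle.coe_period (1 : ℚ)

lemma u_mem (hq : 0 < q) (n : ℕ) : u q n ∈ pruferAddSubgroup q := ⟨n, pow_smul_u hq n⟩

lemma smul_u (hq : 0 < q) (d n : ℕ) : (q ^ d : ℕ) • u q (n + d) = u q n := by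
  rw [u, u, ← AddCircle.coe_nsmul]
  congr 1
  rw [nsmul_eq_mul]
  push_cast
  rw [pow_add]
  have h0 : (q : ℚ) ≠ 0 := by positivity
  field_simp

lemma torsion_char (hq : 0 < q) {n : ℕ} {x : AddCircle (1 : ℚ)} (hx : (q ^ n : ℕ) • x = 0) :
    ∃ k : ℤ, x = k • u q n := by
  induction x using QuotientAddGroup.induction_on with
  | H r =>
    have h1 : (((q ^ n : ℕ) • r : ℚ) : AddCircle (1 : ℚ)) = 0 := by
      rw [AddCircle.coe_nsmul]; exact hx
    rw [AddCircle.coe_eq_zero_iff] at h1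
    obtain ⟨m, hm⟩ := h1
    refine ⟨m, ?_⟩
    rw [u, ← AddCircle.coe_zsmul]
    congr 1
    have h0 : ((q : ℚ)) ^ n ≠ 0 := by positivity
    rw [zsmul_eq_mul]
    have : (m : ℚ) = (q ^ n : ℕ) • r := by rw [← hm]; simp
    rw [nsmul_eq_mul] at this
    push_cast at this ⊢
    field_simp
    linarith [this]

lemma u_ne_zero (hq : 1 < q) {n : ℕ} (hn : 0 < n) : u q n ≠ 0 := by
  rw [u, Ne, AddCircle.coe_eq_zero_iff]
  rintro ⟨m, hm⟩
  simp only [zsmul_eq_mul, mul_one] at hm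
  have h1 : (0 : ℚ) < ((q : ℚ) ^ n)⁻¹ := by positivity
  have h2 : ((q : ℚ) ^ n)⁻¹ < 1 := by
    rw [inv_lt_one_iff₀]
    right
    exact_mod_cast one_lt_pow₀ (by exact_mod_cast hq) hn.ne'
  rw [← hm] at h1 h2
  have := Int.lt_iff_add_one_le.mp (by exact_mod_cast h1 : (0:ℤ) < m)
  have : (1 : ℚ) ≤ m := by exact_mod_cast this
  linarith


lemma sign_mul_sign_self {m : ℤ} (hm : m ≠ 0) : m.sign * m.sign = 1 := by
  rcases lt_trichotomy m 0 with h | h | h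
  · rw [Int.sign_eq_neg_one_of_neg h]; ring
  · exact absurd h hm
  · rw [Int.sign_eq_one_of_pos h]; ring

lemma exists_smul_eq_u (hq : q.Prime) {m : ℤ} (hm : m ≠ 0) (N : ℕ) :
    ∃ z ∈ pruferAddSubgroup q, m • z = u q N := by
  have hq0 : 0 < q := hq.pos
  set e := m.natAbs.factorization q with he
  set b := m.natAbs / q ^ e with hb
  have hmb : (q : ℕ) ^ e * b = m.natAbs := Nat.ordProj_mul_ordCompl_eq_self m.natAbs q
  have hcop : Nat.Coprime q b := Nat.coprime_ordCompl hq (Int.natAbs_ne_zero.mpr hm)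
  have hcopZ : IsCoprime (b : ℤ) ((q : ℤ) ^ N) := by
    refine IsCoprime.pow_right ?_
    rw [Int.isCoprime_iff_gcd_eq_one]
    simpa [Int.gcd, Nat.coprime_comm] using hcop.symm
  obtain ⟨α, β, hαβ⟩ := hcopZ
  refine ⟨(m.sign * α) • u q (N + e), zsmul_mem (u_mem hq0 (N + e)) _, ?_⟩
  rw [smul_smul]
  set s := m.sign with hs
  set n0 : ℤ := (m.natAbs : ℤ) with hn0
  have hss : s * s = 1 := sign_mul_sign_self hm
  have hsn : s * n0 = m := Int.sign_mul_natAbs m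
  have hA : n0 = (q : ℤ) ^ e * b := by rw [hn0, ← hmb]; push_cast; ring
  have key : m * (s * α) = (q : ℤ) ^ e - (β * (q:ℤ)^e) * (q : ℤ) ^ N := by
    rw [← hsn, hA]
    have h1 : s * ((q:ℤ)^e * b) * (s * α) = (s * s) * ((q:ℤ)^e * (α * b)) := by ring
    rw [h1, hss, one_mul]
    have h2 : α * (b:ℤ) = 1 - β * (q:ℤ)^N := by linarith
    rw [h2]; ring
  rw [key, sub_smul, mul_smul]
  have h3 : ((q : ℤ) ^ e) • u q (N + e) = u q N := by
    rw [← Nat.cast_pow, natCast_zsmul]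
    exact smul_u hq0 e N
  have h4 : ((q : ℤ) ^ N) • u q (N + e) = ((q:ℕ) ^ N) • u q (N+e) := by
    rw [← Nat.cast_pow, natCast_zsmul]
  have h5 : ((q : ℤ) ^ (N+e)) • u q (N + e) = 0 := by
    rw [← Nat.cast_pow, natCast_zsmul]
    exact pow_smul_u hq0 (N+e)
  have h6 : (β * (q:ℤ)^e) • (((q : ℤ) ^ N) • u q (N + e)) = 0 := by
    rw [smul_smul, show β * (q:ℤ)^e * (q:ℤ)^N = β * (q:ℤ)^(N+e) by ring, mul_smul, h5,
      smul_zero]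
  rw [h3, h6, sub_zero]

/-- Division by a nonzero integer inside the Prüfer group. -/
lemma exists_smul_eq (hq : q.Prime) {m : ℤ} (hm : m ≠ 0) (y : pruferAddSubgroup q) :
    ∃ z : pruferAddSubgroup q, m • z = y := by
  obtain ⟨n, hn⟩ := y.2
  obtain ⟨k, hk⟩ := torsion_char hq.pos hn
  obtain ⟨z₀, hz₀, hz₀'⟩ := exists_smul_eq_u hq hm n
  refine ⟨k • ⟨z₀, hz₀⟩, ?_⟩
  apply Subtype.ext
  push_cast
  rw [smul_comm, hz₀', ← hk]

/-- The Prüfer group is divisible. -/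
noncomputable def pruferDivisible (hq : q.Prime) : DivisibleBy (pruferAddSubgroup q) ℤ where
  div y m := if hm : m = 0 then 0 else Classical.choose (exists_smul_eq hq hm y)
  div_zero y := by simp
  div_cancel {m} y hm := by
    simp only [dif_neg hm]
    exact Classical.choose_spec (exists_smul_eq hq hm y)

end PruferAux

namespace PruferAux

variable {A : Type*} [AddCommGroup A]

/-- the `p`-primary part of `A`. -/
def ppart (A : Type*) [AddCommGroup A] (p : ℕ) : AddSubgroup A where
  carrier := {x | ∃ n : ℕ, p ^ n • x = 0}
  zero_mem' := ⟨0, smul_zero _⟩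
  add_mem' := by
    rintro a b ⟨n, hn⟩ ⟨m, hm⟩
    refine ⟨n + m, ?_⟩
    rw [smul_add, pow_add, mul_smul, smul_comm (p ^ n) (p ^ m) a, hn, smul_zero, mul_comm,
      mul_smul, smul_comm (p ^ m) (p ^ n) b, hm, smul_zero, zero_add]
  neg_mem' := by
    rintro a ⟨n, hn⟩
    exact ⟨n, by rw [smul_neg, hn, neg_zero]⟩

lemma mem_ppart {p : ℕ} {x : A} : x ∈ ppart A p ↔ ∃ n : ℕ, p ^ n • x = 0 := Iff.rfl

lemma exists_proper_infinite_submodule (K : Type) (V : Type*) [DivisionRing K] [Finite K]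
    [AddCommGroup V] [Module K V] [Infinite V] :
    ∃ W : Submodule K V, W ≠ ⊤ ∧ (W : Set V).Infinite := by
  set b := Module.Basis.ofVectorSpace K V with hb
  haveI : Infinite (Module.Basis.ofVectorSpaceIndex K V) := by
    rw [← not_finite_iff_infinite]
    intro hfin
    haveI : Fintype (Module.Basis.ofVectorSpaceIndex K V) := Fintype.ofFinite _
    have e : V ≃ₗ[K] ((Module.Basis.ofVectorSpaceIndex K V) → K) := Module.Basis.equivFun b
    haveI : Finite V := Finite.of_equiv _ e.toEquiv.symm
    exact not_finite V
  set i₀ := Classical.arbitrary (Module.Basis.ofVectorSpaceIndex K V) with hi₀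
  set s : Set (Module.Basis.ofVectorSpaceIndex K V) := {i₀}ᶜ with hs
  set W := Submodule.span K (⇑b '' s) with hW
  have hW1 : b i₀ ∉ W := b.linearIndependent.notMem_span_image (by simp [hs])
  refine ⟨W, ?_, ?_⟩
  · intro hc
    exact hW1 (hc ▸ Submodule.mem_top)
  · haveI : Infinite ↥s := ((Set.finite_singleton i₀).infinite_compl).to_subtype
    apply Set.infinite_of_injective_forall_mem (f := fun i : ↥s => b (i : Module.Basis.ofVectorSpaceIndex K V))
    · intro i j hij
      exact Subtype.ext (b.injective hij)
    · intro i
      exact Submodule.subset_span (Set.mem_image_of_mem _ i.2)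

section Main

variable [Infinite A] (h : ∀ B : AddSubgroup A, B ≠ ⊤ → (B : Set A).Finite)

include h

lemma eq_top_of_infinite {B : AddSubgroup A} (hB : (B : Set A).Infinite) : B = ⊤ := by
  by_contra hne
  exact hB (h B hne)

lemma torsion (x : A) : 0 < addOrderOf x := by
  rw [addOrderOf_pos_iff, isOfFinAddOrder_iff_nsmul_eq_zero]
  by_contra hx
  push_neg at hx
  have hz : ∀ m : ℤ, m • x = 0 → m = 0 := by
    intro m hm
    by_contra hm0
    refine hx m.natAbs (Int.natAbs_pos.mpr hm0) ?_
    rcases Int.natAbs_eq m with he | he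
    · rw [← natCast_zsmul, ← he, hm]
    · rw [← natCast_zsmul, ← neg_neg ((m.natAbs : ℤ)), ← he, neg_zsmul, hm, neg_zero]
  have hinf : ((AddSubgroup.zmultiples ((2 : ℤ) • x) : AddSubgroup A) : Set A).Infinite := by
    apply Set.infinite_of_injective_forall_mem (f := fun k : ℤ => k • ((2 : ℤ) • x))
    · intro k k' hkk'
      simp only [smul_smul] at hkk'
      have : (k * 2 - k' * 2) • x = 0 := by rw [sub_smul, hkk', sub_self]
      have := hz _ this
      omega
    · intro k
      exact AddSubgroup.zsmul_mem _ (AddSubgroup.mem_zmultiples _) k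
  have htop := eq_top_of_infinite h hinf
  have hx2 : x ∈ AddSubgroup.zmultiples ((2 : ℤ) • x) := htop ▸ AddSubgroup.mem_top x
  obtain ⟨c, hc⟩ := AddSubgroup.mem_zmultiples_iff.mp hx2
  have : (c * 2 - 1) • x = 0 := by
    rw [sub_smul, mul_smul, one_zsmul, hc, sub_self]
  have := hz _ this
  omega

omit h

lemma ppart_inter_eq_bot {p p' : ℕ} (hp : p.Prime) (hp' : p'.Prime) (hne : p ≠ p') {x : A}
    (h1 : x ∈ ppart A p) (h2 : x ∈ ppart A p') : x = 0 := by
  obtain ⟨n, hn⟩ := h1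
  obtain ⟨m, hm⟩ := h2
  have hcop : IsCoprime ((p ^ n : ℕ) : ℤ) ((p' ^ m : ℕ) : ℤ) :=
    Nat.isCoprime_iff_coprime.mpr (Nat.Coprime.pow _ _ ((Nat.coprime_primes hp hp').mpr hne))
  obtain ⟨a, b, hab⟩ := hcop
  calc x = (a * ((p ^ n : ℕ) : ℤ) + b * ((p' ^ m : ℕ) : ℤ)) • x := by rw [hab, one_zsmul]
  _ = a • (((p ^ n : ℕ) : ℤ) • x) + b • (((p' ^ m : ℕ) : ℤ) • x) := by
      rw [add_smul, mul_smul, mul_smul]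
  _ = 0 := by rw [natCast_zsmul, natCast_zsmul, hn, hm, smul_zero, smul_zero, add_zero]

include h

lemma closure_ppart_eq_top :
    AddSubgroup.closure (⋃ p ∈ {p : ℕ | p.Prime}, (ppart A p : Set A)) = ⊤ := by
  set S := ⋃ p ∈ {p : ℕ | p.Prime}, ((ppart A p : AddSubgroup A) : Set A) with hS
  rw [eq_top_iff]
  intro x _
  suffices key : ∀ n, ∀ x : A, addOrderOf x = n → x ∈ AddSubgroup.closure S from key _ x rfl
  intro n
  induction n using Nat.strong_induction_on with
  | _ n ih =>
  intro x hn
  rcases Nat.lt_or_ge n 2 with hn2 | hn2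
  · interval_cases n
    · exact absurd hn (by have := torsion h x; omega)
    · have hx0 : x = 0 := AddMonoid.addOrderOf_eq_one_iff.mp hn
      rw [hx0]
      exact AddSubgroup.zero_mem _
  · set p := n.minFac with hp
    have hpp : p.Prime := Nat.minFac_prime (by omega)
    have hpd : p ∣ n := Nat.minFac_dvd n
    have hn0 : n ≠ 0 := by omega
    set e := n.factorization p with he
    set pk := p ^ e with hpk
    set m := n / pk with hm
    have hnm : pk * m = n := Nat.ordProj_mul_ordCompl_eq_self n p
    have hcop : Nat.Coprime p m := Nat.coprime_ordCompl hpp hn0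
    have he1 : 1 ≤ e := (Nat.Prime.factorization_pos_of_dvd hpp hn0 hpd)
    have hpk2 : 2 ≤ pk := le_trans hpp.two_le (Nat.le_self_pow (by omega) p)
    have hm1 : 1 ≤ m := Nat.one_le_iff_ne_zero.mpr (by
      intro h0
      rw [h0, mul_zero] at hnm
      omega)
    have hmn : m < n := by
      calc m < pk * m := by nlinarith
      _ = n := hnm
    have hcopZ : IsCoprime ((pk : ℕ) : ℤ) ((m : ℕ) : ℤ) :=
      Nat.isCoprime_iff_coprime.mpr (hcop.pow_left e)
    obtain ⟨a, b, hab⟩ := hcopZ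
    have hnx : (n : ℕ) • x = 0 := by rw [← hn]; exact addOrderOf_nsmul_eq_zero x
    have hxsplit : x = (a * (pk : ℤ)) • x + (b * (m : ℤ)) • x := by
      rw [← add_smul]
      have : a * (pk : ℤ) + b * (m : ℤ) = 1 := hab
      rw [this, one_zsmul]
    set y := (a * (pk : ℤ)) • x with hy
    set z := (b * (m : ℤ)) • x with hz'
    have hyo : (m : ℕ) • y = 0 := by
      rw [hy, ← natCast_zsmul, smul_smul, show (m : ℤ) * (a * pk) = a * ((pk * m : ℕ) : ℤ) by
        push_cast; ring, mul_smul, natCast_zsmul, hnm, hnx, smul_zero]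
    have hzo : (pk : ℕ) • z = 0 := by
      rw [hz', ← natCast_zsmul, smul_smul, show (pk : ℤ) * (b * m) = b * ((pk * m : ℕ) : ℤ) by
        push_cast; ring, mul_smul, natCast_zsmul, hnm, hnx, smul_zero]
    have hymem : y ∈ AddSubgroup.closure S := by
      have hdvd : addOrderOf y ∣ m := addOrderOf_dvd_iff_nsmul_eq_zero.mpr hyo
      have : addOrderOf y < n := lt_of_le_of_lt (Nat.le_of_dvd (by omega) hdvd) hmn
      exact ih _ this y rfl
    have hzmem : z ∈ AddSubgroup.closure S := by
      apply AddSubgroup.subset_closure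
      rw [hS]
      apply Set.mem_biUnion hpp
      exact ⟨e, hzo⟩
    rw [hxsplit]
    exact AddSubgroup.add_mem _ hymem hzmem

omit h

lemma eq_zero_of_coprime_nsmul {a b : ℕ} (hab : Nat.Coprime a b) {x : A} (ha : a • x = 0)
    (hb : b • x = 0) : x = 0 := by
  have hcop : IsCoprime ((a : ℕ) : ℤ) ((b : ℕ) : ℤ) := Nat.isCoprime_iff_coprime.mpr hab
  obtain ⟨α, β, hαβ⟩ := hcop
  calc x = (α * ((a : ℕ) : ℤ) + β * ((b : ℕ) : ℤ)) • x := by rw [hαβ, one_zsmul]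
  _ = α • (((a : ℕ) : ℤ) • x) + β • (((b : ℕ) : ℤ) • x) := by
      rw [add_smul, mul_smul, mul_smul]
  _ = 0 := by rw [natCast_zsmul, natCast_zsmul, ha, hb, smul_zero, smul_zero, add_zero]

lemma finset_sup_finite (F : Finset ℕ) (f : ℕ → AddSubgroup A)
    (hf : ∀ p ∈ F, ((f p : AddSubgroup A) : Set A).Finite) :
    ((F.sup f : AddSubgroup A) : Set A).Finite := by
  induction F using Finset.induction_on with
  | empty => simp
  | insert _ _ hnot ih =>
    rename_i a s
    rw [Finset.sup_insert]
    have h1 : ((f a : AddSubgroup A) : Set A).Finite := hf a (Finset.mem_insert_self a s)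
    have h2 : ((s.sup f : AddSubgroup A) : Set A).Finite :=
      ih fun p hp => hf p (Finset.mem_insert_of_mem hp)
    apply Set.Finite.subset (h1.image2 (· + ·) h2)
    rintro x hx
    obtain ⟨y, hy, z, hz, rfl⟩ := AddSubgroup.mem_sup.mp hx
    exact Set.mem_image2_of_mem hy hz

include h

lemma exists_prime_ppart_top : ∃ q : ℕ, q.Prime ∧ ppart A q = ⊤ := by
  by_cases hcase : ∃ q : ℕ, q.Prime ∧ ((ppart A q : AddSubgroup A) : Set A).Infinite
  · obtain ⟨q, hq, hinf⟩ := hcase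
    exact ⟨q, hq, eq_top_of_infinite h hinf⟩
  push_neg at hcase
  exfalso
  set Pset : Set ℕ := {p | p.Prime ∧ ppart A p ≠ ⊥} with hPset
  have hPinf : Pset.Infinite := by
    by_contra hfin
    rw [Set.not_infinite] at hfin
    set F := hfin.toFinset with hF
    have hle : (⊤ : AddSubgroup A) ≤ F.sup fun p => ppart A p := by
      rw [← closure_ppart_eq_top h]
      rw [AddSubgroup.closure_le]
      rintro x hx
      simp only [Set.mem_iUnion] at hx
      obtain ⟨p, hp, hxp⟩ := hx
      by_cases hbot : ppart A p = ⊥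
      · rw [hbot] at hxp
        simp only [AddSubgroup.coe_bot, Set.mem_singleton_iff] at hxp
        rw [hxp]
        exact AddSubgroup.zero_mem _
      · have hpF : p ∈ F := hfin.mem_toFinset.mpr ⟨hp, hbot⟩
        exact Finset.le_sup (f := fun p => ppart A p) hpF hxp
    have hfin2 : ((F.sup fun p => ppart A p : AddSubgroup A) : Set A).Finite :=
      finset_sup_finite F _ fun p hp => hcase p (hfin.mem_toFinset.mp hp).1
    have : (Set.univ : Set A).Finite := by
      apply hfin2.subset
      intro x _
      exact hle (AddSubgroup.mem_top x)
    exact Set.infinite_univ this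
  obtain ⟨q₀, hq₀⟩ := hPinf.nonempty
  set B := AddSubgroup.closure (⋃ p ∈ Pset \ {q₀}, ((ppart A p : AddSubgroup A) : Set A))
    with hB
  have hchoice : ∀ p : ↥(Pset \ {q₀}), ∃ x : A, x ∈ ppart A (p : ℕ) ∧ x ≠ 0 := by
    rintro ⟨p, hp, -⟩
    obtain ⟨⟨x, hx⟩, hx0⟩ := (AddSubgroup.ne_bot_iff_exists_ne_zero).mp hp.2
    exact ⟨x, hx, fun hc => hx0 (Subtype.ext hc)⟩
  choose f hf1 hf2 using hchoice
  have hBinf : ((B : AddSubgroup A) : Set A).Infinite := by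
    haveI : Infinite ↥(Pset \ {q₀}) := (hPinf.diff (Set.finite_singleton q₀)).to_subtype
    apply Set.infinite_of_injective_forall_mem (f := f)
    · intro p p' hpp'
      by_contra hne
      have hne' : (p : ℕ) ≠ (p' : ℕ) := fun hc => hne (Subtype.ext hc)
      have : f p = 0 := ppart_inter_eq_bot p.2.1.1 p'.2.1.1 hne' (hf1 p) (hpp' ▸ hf1 p')
      exact hf2 p this
    · intro p
      apply AddSubgroup.subset_closure
      exact Set.mem_biUnion p.2 (hf1 p)
  have hBtop : B = ⊤ := eq_top_of_infinite h hBinf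
  have hprop : ∀ x ∈ B, ∃ m : ℕ, 0 < m ∧ Nat.Coprime q₀ m ∧ m • x = 0 := by
    intro x hx
    induction hx using AddSubgroup.closure_induction with
    | mem x hx =>
      simp only [Set.mem_iUnion] at hx
      obtain ⟨p, hp, hxp⟩ := hx
      obtain ⟨n, hn⟩ := hxp
      refine ⟨p ^ n, pow_pos hp.1.1.pos n, ?_, hn⟩
      have hne : q₀ ≠ p := fun hc => hp.2 (Set.mem_singleton_iff.mpr hc.symm)
      exact Nat.Coprime.pow_right n ((Nat.coprime_primes hq₀.1 hp.1.1).mpr hne)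
    | zero => exact ⟨1, one_pos, Nat.coprime_one_right _, one_smul _ _⟩
    | add x y hx hy ihx ihy =>
      obtain ⟨m₁, hm₁, hc₁, he₁⟩ := ihx
      obtain ⟨m₂, hm₂, hc₂, he₂⟩ := ihy
      refine ⟨m₁ * m₂, Nat.mul_pos hm₁ hm₂, Nat.Coprime.mul_right hc₁ hc₂, ?_⟩
      have e1 : (m₁ * m₂) • x = 0 := by rw [mul_comm, mul_smul, he₁, smul_zero]
      have e2 : (m₁ * m₂) • y = 0 := by rw [mul_smul, he₂, smul_zero]
      rw [smul_add, e1, e2, add_zero]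
    | neg x hx ihx =>
      obtain ⟨m, hm, hc, he⟩ := ihx
      exact ⟨m, hm, hc, by rw [smul_neg, he, neg_zero]⟩
  obtain ⟨⟨y, hy⟩, hy0'⟩ := AddSubgroup.ne_bot_iff_exists_ne_zero.mp hq₀.2
  have hy0 : y ≠ 0 := fun hc => hy0' (Subtype.ext hc)
  obtain ⟨m, hm, hc, he⟩ := hprop y (hBtop ▸ AddSubgroup.mem_top y)
  obtain ⟨k, hk⟩ := hy
  exact hy0 (eq_zero_of_coprime_nsmul ((hc.pow_left k)) hk he)

lemma fin_of_fin_range_ker (φ : A →+ A) (hr : ((φ.range : AddSubgroup A) : Set A).Finite)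
    (hk : ((φ.ker : AddSubgroup A) : Set A).Finite) : (Set.univ : Set A).Finite := by
  have hcov : (Set.univ : Set A) ⊆ ⋃ y ∈ ((φ.range : AddSubgroup A) : Set A), φ ⁻¹' {y} := by
    intro x _
    exact Set.mem_biUnion ⟨x, rfl⟩ rfl
  apply Set.Finite.subset _ hcov
  apply hr.biUnion
  intro y _
  by_cases hy : ∃ x₀, φ x₀ = y
  · obtain ⟨x₀, hx₀⟩ := hy
    apply Set.Finite.subset (hk.image (fun z => x₀ + z))
    intro x hx
    simp only [Set.mem_preimage, Set.mem_singleton_iff] at hx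
    refine ⟨x - x₀, ?_, by show x₀ + (x - x₀) = x; rw [add_sub_cancel]⟩
    simp only [SetLike.mem_coe, AddMonoidHom.mem_ker, map_sub, hx, hx₀, sub_self]
  · have : φ ⁻¹' {y} = ∅ := by
      ext x
      simp only [Set.mem_preimage, Set.mem_singleton_iff, Set.mem_empty_iff_false, iff_false]
      exact fun hc => hy ⟨x, hc⟩
    rw [this]
    exact Set.finite_empty

omit h in
lemma no_infinite_vector_space {q : ℕ} (hq : q.Prime) (hq1 : ∀ x : A, q • x = 0) :
    ∃ W : AddSubgroup A, W ≠ ⊤ ∧ ((W : AddSubgroup A) : Set A).Infinite := by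
  haveI : Fact q.Prime := ⟨hq⟩
  letI : Module (ZMod q) A := AddCommGroup.zmodModule hq1
  obtain ⟨W, hW1, hW2⟩ := exists_proper_infinite_submodule (ZMod q) A
  refine ⟨W.toAddSubgroup, ?_, hW2⟩
  intro hc
  apply hW1
  ext x
  constructor
  · intro _
    trivial
  · intro _
    have : x ∈ W.toAddSubgroup := hc ▸ AddSubgroup.mem_top x
    exact this

lemma smul_surj {q : ℕ} (hq : q.Prime) (y : A) : ∃ x : A, q • x = y := by
  set φ : A →+ A := AddMonoidHom.mk' (fun x => q • x) (fun a b => smul_add q a b) with hφ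
  by_contra hy
  push_neg at hy
  have hrange : φ.range ≠ ⊤ := by
    intro hc
    have hmem : y ∈ φ.range := by rw [hc]; exact AddSubgroup.mem_top y
    obtain ⟨x, hx⟩ := hmem
    exact hy x hx
  have hrfin := h _ hrange
  have hker : φ.ker = ⊤ := by
    by_contra hk
    exact Set.infinite_univ (fin_of_fin_range_ker h φ hrfin (h _ hk))
  have hq1 : ∀ x : A, q • x = 0 := by
    intro x
    have : x ∈ φ.ker := hker ▸ AddSubgroup.mem_top x
    exact this
  obtain ⟨W, hW1, hW2⟩ := no_infinite_vector_space hq hq1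
  exact hW2 (h W hW1)

variable {q : ℕ}

lemma exists_order_q (hq : q.Prime) (hA : ∀ x : A, ∃ n : ℕ, q ^ n • x = 0) :
    ∃ a : A, a ≠ 0 ∧ q • a = 0 := by
  classical
  obtain ⟨x, hx0⟩ := exists_ne (0 : A)
  have hex := hA x
  set n := Nat.find hex with hn
  have hnspec : q ^ n • x = 0 := Nat.find_spec hex
  have hn0 : n ≠ 0 := by
    intro hc
    rw [hc, pow_zero, one_smul] at hnspec
    exact hx0 hnspec
  refine ⟨q ^ (n - 1) • x, ?_, ?_⟩
  · intro hc
    exact Nat.find_min hex (show n - 1 < n by omega) hc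
  · rw [smul_smul]
    have : q * q ^ (n - 1) = q ^ n := by
      rw [← pow_succ']
      congr 1
      omega
    rw [this, hnspec]

lemma exists_chain (hq : q.Prime) (hA : ∀ x : A, ∃ n : ℕ, q ^ n • x = 0) :
    ∃ a : ℕ → A, a 0 ≠ 0 ∧ q • a 0 = 0 ∧ ∀ n, q • a (n + 1) = a n := by
  obtain ⟨a₀, ha₀, ha₀q⟩ := exists_order_q h hq hA
  have hdiv : ∀ y : A, ∃ x, q • x = y := fun y => smul_surj h hq y
  refine ⟨fun n => Nat.rec a₀ (fun _ prev => Classical.choose (hdiv prev)) n, ha₀, ha₀q, ?_⟩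
  intro n
  exact Classical.choose_spec (hdiv _)

omit h

section Chain

variable {a : ℕ → A} (ha0 : a 0 ≠ 0) (haq : q • a 0 = 0) (hstep : ∀ n, q • a (n + 1) = a n)

include haq hstep in
lemma chain_pow_smul : ∀ n, q ^ n • a n = a 0 := by
  intro n
  induction n with
  | zero => rw [pow_zero, one_smul]
  | succ n ih =>
    rw [pow_succ, mul_smul, hstep, ih]

include haq hstep in
lemma chain_pow_succ_smul (n : ℕ) : q ^ (n + 1) • a n = 0 := by
  rw [pow_succ', mul_smul, chain_pow_smul haq hstep, haq]

include ha0 haq hstep in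
lemma chain_orderOf (hq : q.Prime) (n : ℕ) : addOrderOf (a n) = q ^ (n + 1) := by
  have hdvd : addOrderOf (a n) ∣ q ^ (n + 1) :=
    addOrderOf_dvd_iff_nsmul_eq_zero.mpr (chain_pow_succ_smul haq hstep n)
  obtain ⟨j, hj, hjo⟩ := (Nat.dvd_prime_pow hq).mp hdvd
  rcases Nat.lt_or_ge j (n + 1) with hlt | hge
  · exfalso
    have : q ^ n • a n = 0 := by
      apply addOrderOf_dvd_iff_nsmul_eq_zero.mp
      rw [hjo]
      exact pow_dvd_pow q (by omega)
    rw [chain_pow_smul haq hstep] at this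
    exact ha0 this
  · rw [hjo]
    congr 1
    omega

include haq hstep in
lemma chain_shift : ∀ (d n : ℕ), q ^ d • a (n + d) = a n := by
  intro d
  induction d with
  | zero =>
    intro n
    rw [pow_zero, one_smul]
    exact congrArg a (Nat.add_zero n)
  | succ d ih =>
    intro n
    have h2 : a (n + (d + 1)) = a ((n + d) + 1) := by
      congr 1
    rw [pow_succ, mul_smul, h2, hstep, ih]

end Chain

include h in
lemma chain_generates (hq : q.Prime) {a : ℕ → A} (ha0 : a 0 ≠ 0) (haq : q • a 0 = 0)
    (hstep : ∀ n, q • a (n + 1) = a n) (x : A) : ∃ (n : ℕ) (k : ℤ), x = k • a n := by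
  set B := AddSubgroup.closure (Set.range a) with hB
  have hBinf : ((B : AddSubgroup A) : Set A).Infinite := by
    apply Set.infinite_of_injective_forall_mem (f := a)
    · intro n m hnm
      have : addOrderOf (a n) = addOrderOf (a m) := by rw [hnm]
      rw [chain_orderOf ha0 haq hstep hq, chain_orderOf ha0 haq hstep hq] at this
      have := Nat.pow_right_injective hq.two_le this
      omega
    · intro n
      exact AddSubgroup.subset_closure (Set.mem_range_self n)
  have hBtop : B = ⊤ := eq_top_of_infinite h hBinf
  have hx : x ∈ B := hBtop ▸ AddSubgroup.mem_top x
  clear hBtop hBinf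
  induction hx using AddSubgroup.closure_induction with
  | mem y hy =>
    obtain ⟨n, rfl⟩ := hy
    exact ⟨n, 1, by rw [one_zsmul]⟩
  | zero => exact ⟨0, 0, by rw [zero_zsmul]⟩
  | add y z hy hz ihy ihz =>
    obtain ⟨n, k, rfl⟩ := ihy
    obtain ⟨m, l, rfl⟩ := ihz
    rcases le_total n m with hnm | hnm
    · refine ⟨m, k * (q ^ (m - n) : ℕ) + l, ?_⟩
      have h1 : n + (m - n) = m := by omega
      have han := chain_shift haq hstep (m - n) n
      rw [h1] at han
      rw [← han, add_smul, ← natCast_zsmul, smul_smul]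
    · refine ⟨n, k + l * (q ^ (n - m) : ℕ), ?_⟩
      have h1 : m + (n - m) = n := by omega
      have ham := chain_shift haq hstep (n - m) m
      rw [h1] at ham
      rw [← ham, add_smul, ← natCast_zsmul, smul_smul]
  | neg y hy ihy =>
    obtain ⟨n, k, rfl⟩ := ihy
    exact ⟨n, -k, by rw [neg_zsmul]⟩

end Main

end PruferAux

namespace PruferAux

variable {q : ℕ}

lemma u_zsmul_pow (hq : 0 < q) (n : ℕ) : ((q : ℤ) ^ n) • u q n = 0 := by
  rw [show ((q : ℤ) ^ n) = ((q ^ n : ℕ) : ℤ) by push_cast; ring, natCast_zsmul]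
  exact pow_smul_u hq n

lemma dvd_sub_one (hq : 0 < q) {M : ℕ} {c : ℤ}
    (hcc : ((c * (q : ℤ) ^ M) : ℤ) • u q (M + 1) = u q 1) : (q : ℤ) ∣ c - 1 := by
  have hqne : ((q : ℚ)) ≠ 0 := by positivity
  rw [u, u, ← AddCircle.coe_zsmul] at hcc
  have h4 : (((c * (q:ℤ)^M : ℤ) • (((q : ℚ) ^ (M+1))⁻¹) - ((q : ℚ) ^ 1)⁻¹ : ℚ) :
      AddCircle (1 : ℚ)) = 0 := by
    rw [AddCircle.coe_sub, hcc, sub_self]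
  rw [AddCircle.coe_eq_zero_iff] at h4
  obtain ⟨t, ht⟩ := h4
  rw [zsmul_eq_mul, mul_one] at ht
  rw [zsmul_eq_mul] at ht
  have e2 : (t : ℚ) * q = c - 1 := by
    rw [ht]
    push_cast
    rw [pow_succ]
    field_simp
  refine ⟨t, ?_⟩
  have : ((c - 1 : ℤ) : ℚ) = ((q * t : ℤ) : ℚ) := by push_cast; linarith [e2]
  exact_mod_cast this

universe uA

lemma exists_hom_ext (hq : q.Prime) {A : Type uA} [AddCommGroup A]
    (g₁ : ZMod q →+ A) (hinj : Function.Injective g₁) (g₂ : ZMod q →+ pruferAddSubgroup q) :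
    ∃ F : A →+ pruferAddSubgroup q, ∀ k : ZMod q, F (g₁ k) = g₂ k := by
  letI : DivisibleBy (pruferAddSubgroup q) ℤ := pruferDivisible hq
  letI : DivisibleBy (ULift.{uA} (pruferAddSubgroup q)) ℤ :=
    { div := fun y m => ⟨DivisibleBy.div y.down m⟩
      div_zero := fun y => by
        apply ULift.down_injective
        exact DivisibleBy.div_zero y.down
      div_cancel := fun {m} y hm => by
        apply ULift.down_injective
        exact DivisibleBy.div_cancel y.down hm }
  haveI : Module.Injective ℤ (ULift.{uA} (pruferAddSubgroup q)) :=
    Module.Baer.injective (Module.Baer.of_divisible _)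
  set e₁ : ULift.{uA} (ZMod q) ≃ₗ[ℤ] ZMod q := ULift.moduleEquiv with he₁
  set e₂ : ULift.{uA} (pruferAddSubgroup q) ≃ₗ[ℤ] pruferAddSubgroup q := ULift.moduleEquiv with he₂
  set f : ULift.{uA} (ZMod q) →ₗ[ℤ] A := g₁.toIntLinearMap.comp e₁.toLinearMap with hf
  have hfinj : Function.Injective f := by
    intro x y hxy
    have h1 : g₁ (e₁ x) = g₁ (e₁ y) := hxy
    exact e₁.injective (hinj h1)
  set g : ULift.{uA} (ZMod q) →ₗ[ℤ] ULift.{uA} (pruferAddSubgroup q) :=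
    e₂.symm.toLinearMap.comp (g₂.toIntLinearMap.comp e₁.toLinearMap) with hg
  obtain ⟨h', hh⟩ := Module.Injective.out f hfinj g
  refine ⟨(e₂.toLinearMap.comp h').toAddMonoidHom, fun k => ?_⟩
  have h2 := hh (ULift.up k)
  show e₂ (h' (f (ULift.up k))) = g₂ k
  rw [h2]
  show e₂ (e₂.symm (g₂ k)) = g₂ k
  exact e₂.apply_symm_apply _

end PruferAux

end

/-- An infinite abelian group all of whose proper subgroups are finite is a Prüfer
`q`-group for some prime `q`. -/
theorem infinite_abelian_proper_subgroups_finite_is_prufer (A : Type*) [AddCommGroup A]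
    [Infinite A] (h : ∀ B : AddSubgroup A, B ≠ ⊤ → (B : Set A).Finite) :
    ∃ q : ℕ, q.Prime ∧ Nonempty (A ≃+ pruferAddSubgroup q) := by
  classical
  obtain ⟨q, hq, hqtop⟩ := PruferAux.exists_prime_ppart_top h
  refine ⟨q, hq, ?_⟩
  have hA : ∀ x : A, ∃ n : ℕ, q ^ n • x = 0 := by
    intro x
    have hx : x ∈ PruferAux.ppart A q := by rw [hqtop]; exact AddSubgroup.mem_top x
    exact hx
  obtain ⟨a, ha0, haq, hstep⟩ := PruferAux.exists_chain h hq hA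
  set P := pruferAddSubgroup q with hP
  set u₀ : P := ⟨PruferAux.u q 1, PruferAux.u_mem hq.pos 1⟩ with hu₀
  have hu₀0 : u₀ ≠ 0 := by
    intro hc
    exact PruferAux.u_ne_zero hq.one_lt one_pos (congrArg Subtype.val hc)
  have hqu₀ : q • u₀ = 0 := by
    apply Subtype.ext
    push_cast
    have := PruferAux.pow_smul_u hq.pos (q := q) 1
    rw [pow_one] at this
    exact this
  have hga : ((zmultiplesHom A) (a 0)) (q : ℤ) = 0 := by
    show (q : ℤ) • a 0 = 0
    rw [natCast_zsmul, haq]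
  set g₁ : ZMod q →+ A := ZMod.lift q ⟨(zmultiplesHom A) (a 0), hga⟩ with hg₁
  have horda : addOrderOf (a 0) = q := by
    have h1 := PruferAux.chain_orderOf ha0 haq hstep hq 0
    rw [zero_add, pow_one] at h1
    exact h1
  have hg₁inj : Function.Injective g₁ := by
    rw [hg₁, ZMod.lift_injective]
    intro m hm
    have hdvd : ((addOrderOf (a 0) : ℤ)) ∣ m := addOrderOf_dvd_iff_zsmul_eq_zero.mpr hm
    rw [horda] at hdvd
    exact (ZMod.intCast_zmod_eq_zero_iff_dvd m q).mpr hdvd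
  have hgu : ((zmultiplesHom P) u₀) (q : ℤ) = 0 := by
    show (q : ℤ) • u₀ = 0
    rw [natCast_zsmul, hqu₀]
  set g₂ : ZMod q →+ P := ZMod.lift q ⟨(zmultiplesHom P) u₀, hgu⟩ with hg₂
  obtain ⟨F, hF⟩ := PruferAux.exists_hom_ext hq g₁ hg₁inj g₂
  have hFa0 : F (a 0) = u₀ := by
    have h1 := hF ((1 : ℤ) : ZMod q)
    rw [hg₁, hg₂, ZMod.lift_coe, ZMod.lift_coe] at h1
    simpa using h1
  have hz : ∀ n : ℕ, ((q : ℤ) ^ (n + 1)) • a n = 0 := by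
    intro n
    rw [show ((q : ℤ) ^ (n + 1)) = ((q ^ (n + 1) : ℕ) : ℤ) by push_cast; ring, natCast_zsmul]
    exact PruferAux.chain_pow_succ_smul haq hstep n
  have hFinj : Function.Injective F := by
    rw [injective_iff_map_eq_zero]
    intro x hx
    by_contra hx0
    obtain ⟨n, k, rfl⟩ := PruferAux.chain_generates h hq ha0 haq hstep x
    set d := Int.gcd k ((q : ℤ) ^ (n + 1)) with hd
    have hdvd : (d : ℕ) ∣ q ^ (n + 1) := by
      have h2 : ((d : ℕ) : ℤ) ∣ ((q ^ (n + 1) : ℕ) : ℤ) := by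
        rw [show ((q ^ (n + 1) : ℕ) : ℤ) = (q : ℤ) ^ (n + 1) by push_cast; ring]
        exact Int.gcd_dvd_right _ _
      exact_mod_cast h2
    obtain ⟨j, hj, hdj⟩ := (Nat.dvd_prime_pow hq).mp hdvd
    have hjn : j ≤ n := by
      by_contra hjgt
      have hj1 : j = n + 1 := by omega
      have hdk : ((q : ℤ) ^ (n + 1)) ∣ k := by
        have h2 : ((Int.gcd k ((q : ℤ) ^ (n + 1)) : ℕ) : ℤ) ∣ k := Int.gcd_dvd_left _ _
        rw [← hd, hdj, hj1] at h2
        rw [show ((q : ℤ) ^ (n + 1)) = ((q ^ (n + 1) : ℕ) : ℤ) by push_cast; ring]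
        exact_mod_cast h2
      obtain ⟨c, rfl⟩ := hdk
      apply hx0
      calc ((q : ℤ) ^ (n + 1) * c) • a n = c • (((q : ℤ) ^ (n + 1)) • a n) := by
            rw [smul_smul, mul_comm]
      _ = 0 := by rw [hz n, smul_zero]
    have hbez := Int.gcd_eq_gcd_ab k ((q : ℤ) ^ (n + 1))
    set α := Int.gcdA k ((q : ℤ) ^ (n + 1)) with hα
    set β := Int.gcdB k ((q : ℤ) ^ (n + 1)) with hβ
    have hαk : α * k = (d : ℤ) - (q : ℤ) ^ (n + 1) * β := by
      rw [← hd] at hbez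
      linarith [hbez]
    have e1 : ((q ^ (n - j) : ℕ) : ℤ) * ((d : ℕ) : ℤ) = ((q ^ n : ℕ) : ℤ) := by
      rw [hdj]
      push_cast
      rw [← pow_add]
      congr 1
      omega
    have hcoef : ((q ^ (n - j) : ℕ) : ℤ) * α * k =
        ((q ^ n : ℕ) : ℤ) - (β * ((q ^ (n - j) : ℕ) : ℤ)) * ((q : ℤ) ^ (n + 1)) := by
      rw [mul_assoc, hαk, mul_sub, e1]
      ring
    have ha0mem : ((q ^ (n - j) : ℕ) : ℤ) • (α • (k • a n)) = a 0 := by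
      rw [smul_smul, smul_smul, hcoef, sub_smul, mul_smul, hz n, smul_zero, sub_zero,
        natCast_zsmul]
      exact PruferAux.chain_pow_smul haq hstep n
    have hF0 : F (a 0) = 0 := by
      rw [← ha0mem, map_zsmul, map_zsmul, hx, smul_zero, smul_zero]
    rw [hFa0] at hF0
    exact hu₀0 hF0
  have hFsurj : Function.Surjective F := by
    have hgen : ∀ M : ℕ, ∃ w : A, ((F w : P) : AddCircle (1 : ℚ)) = PruferAux.u q (M + 1) := by
      intro M
      set v := F (a M) with hv
      have hv1 : (q ^ (M + 1) : ℕ) • (v : AddCircle (1 : ℚ)) = 0 := by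
        have h2 : (q ^ (M + 1) : ℕ) • v = 0 := by
          rw [hv, ← map_nsmul, PruferAux.chain_pow_succ_smul haq hstep M, map_zero]
        calc (q ^ (M + 1) : ℕ) • (v : AddCircle (1 : ℚ))
            = (((q ^ (M + 1) : ℕ) • v : P) : AddCircle (1 : ℚ)) := by push_cast; rfl
        _ = 0 := by rw [h2]; rfl
      obtain ⟨c, hc⟩ := PruferAux.torsion_char hq.pos hv1
      have hvM : (q ^ M : ℕ) • v = u₀ := by
        rw [hv, ← map_nsmul, PruferAux.chain_pow_smul haq hstep M, hFa0]
      have hvM' : ((c * (q : ℤ) ^ M) : ℤ) • PruferAux.u q (M + 1) = PruferAux.u q 1 := by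
        have h3 : (q ^ M : ℕ) • (v : AddCircle (1 : ℚ)) = PruferAux.u q 1 := by
          calc (q ^ M : ℕ) • (v : AddCircle (1 : ℚ))
              = (((q ^ M : ℕ) • v : P) : AddCircle (1 : ℚ)) := by push_cast; rfl
          _ = PruferAux.u q 1 := by rw [hvM]
        rw [hc] at h3
        calc ((c * (q : ℤ) ^ M) : ℤ) • PruferAux.u q (M + 1)
            = ((q : ℤ) ^ M) • (c • PruferAux.u q (M + 1)) := by
              rw [smul_smul, mul_comm]
        _ = (q ^ M : ℕ) • (c • PruferAux.u q (M + 1)) := by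
              rw [show ((q : ℤ) ^ M) = ((q ^ M : ℕ) : ℤ) by push_cast; ring, natCast_zsmul]
        _ = PruferAux.u q 1 := h3
      have hdq : (q : ℤ) ∣ c - 1 := PruferAux.dvd_sub_one hq.pos hvM'
      obtain ⟨t, ht⟩ := hdq
      have hcop : IsCoprime c ((q : ℤ) ^ (M + 1)) := by
        apply IsCoprime.pow_right
        exact ⟨1, -t, by linarith⟩
      obtain ⟨γ, δ, hγδ⟩ := hcop
      refine ⟨γ • a M, ?_⟩
      rw [map_zsmul, ← hv]
      calc ((γ • v : P) : AddCircle (1 : ℚ)) = γ • (v : AddCircle (1 : ℚ)) := by push_cast; rfl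
      _ = (γ * c) • PruferAux.u q (M + 1) := by rw [hc, smul_smul]
      _ = (1 - δ * (q : ℤ) ^ (M + 1)) • PruferAux.u q (M + 1) := by
            congr 1
            linarith [hγδ]
      _ = PruferAux.u q (M + 1) := by
            rw [sub_smul, one_zsmul, mul_smul, PruferAux.u_zsmul_pow hq.pos, smul_zero, sub_zero]
    intro y
    obtain ⟨N, hN⟩ := y.2
    obtain ⟨k, hk⟩ := PruferAux.torsion_char hq.pos hN
    cases N with
    | zero =>
      refine ⟨0, ?_⟩
      apply Subtype.ext
      rw [map_zero]
      have hu0 : PruferAux.u q 0 = 0 := by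
        rw [PruferAux.u, pow_zero, inv_one]
        exact AddCircle.coe_period (1 : ℚ)
      rw [hu0, smul_zero] at hk
      exact hk.symm
    | succ M =>
      obtain ⟨w, hw⟩ := hgen M
      refine ⟨k • w, ?_⟩
      apply Subtype.ext
      rw [map_zsmul]
      calc ((k • F w : P) : AddCircle (1 : ℚ)) = k • ((F w : P) : AddCircle (1 : ℚ)) := by
            push_cast; rfl
      _ = k • PruferAux.u q (M + 1) := by rw [hw]
      _ = (y : AddCircle (1 : ℚ)) := hk.symm
  exact ⟨AddEquiv.ofBijective F ⟨hFinj, hFsurj⟩⟩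
end

section
/- Let Q be a Prüfer q-group acting on an abelian group A such that Q acts trivially on [A, Q] (the subgroup generated by all a·x − a). Then for every a ∈ A, the subgroup [a, Q] = {a·x − a | x ∈ Q} is either trivial or a divisible q-group whose elements all have q-power order. -/
section SmulSubSelf

variable {Q A : Type*} [Group Q] [AddCommGroup A] [DistribMulAction Q A] {a : A}

theorem mul_smul_sub_self (h : ∀ x y : Q, x • (y • a - a) = y • a - a) (x y : Q) :
    (x * y) • a - a = (x • a - a) + (y • a - a) := by
  have hx : x • y • a = (y • a - a) + x • a := by
    rw [← h x y, smul_sub]; abel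
  rw [mul_smul, hx]; abel

variable (a) in
def smulSubSelfHom (h : ∀ x y : Q, x • (y • a - a) = y • a - a) : Additive Q →+ A where
  toFun x := x.toMul • a - a
  map_zero' := by simp
  map_add' x y := mul_smul_sub_self h x.toMul y.toMul

theorem closure_smul_sub_self (h : ∀ x y : Q, x • (y • a - a) = y • a - a) :
    AddSubgroup.closure {b : A | ∃ x : Q, b = x • a - a} = (smulSubSelfHom a h).range := by
  convert AddSubgroup.closure_eq (smulSubSelfHom a h).range using 2
  ext b
  exact ⟨fun ⟨x, hx⟩ => ⟨.ofMul x, hx.symm⟩, fun ⟨y, hy⟩ => ⟨y.toMul, hy.symm⟩⟩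

end SmulSubSelf

namespace pruferAddSubgroup

variable {q : ℕ}

theorem exists_pow_nsmul_eq_zero (p : pruferAddSubgroup q) : ∃ m : ℕ, q ^ m • p = 0 :=
  let ⟨m, hm⟩ := p.2
  ⟨m, Subtype.ext hm⟩

/-- Write `n = q ^ k * r` with `r` prime to `q`: dividing by `r` is inverting it modulo the
order of `p`, and dividing by `q ^ k` is done in `ℚ/ℤ`, which stays in the `q`-primary part. -/
theorem exists_nsmul_eq (hq : q.Prime) (p : pruferAddSubgroup q) {n : ℕ} (hn : n ≠ 0) :
    ∃ c : pruferAddSubgroup q, n • c = p := by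
  obtain ⟨k, r, hqr, rfl⟩ := Nat.exists_eq_pow_mul_and_not_dvd hn q hq.ne_one
  obtain ⟨m, hm⟩ := exists_pow_nsmul_eq_zero p
  have hr : r.Coprime (addOrderOf p) :=
    ((hq.coprime_iff_not_dvd.2 hqr).pow_left m).symm.coprime_dvd_right
      (addOrderOf_dvd_of_nsmul_eq_zero hm)
  obtain ⟨s, hs⟩ := exists_nsmul_eq_self_of_coprime hr
  obtain ⟨d, hd⟩ : ∃ d : AddCircle (1 : ℚ), q ^ k • d = ((s • p : pruferAddSubgroup q) : _) :=
    ⟨DivisibleBy.div _ ((q ^ k : ℕ) : ℤ), by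
      rw [← natCast_zsmul]
      exact DivisibleBy.div_cancel _ (Int.natCast_ne_zero.2 (pow_ne_zero k hq.ne_zero))⟩
  have hd_mem : d ∈ pruferAddSubgroup q :=
    ⟨m + k, by rw [pow_add, mul_smul, hd, ← AddSubgroup.coe_nsmul, smul_comm, hm, smul_zero,
      AddSubgroup.coe_zero]⟩
  refine ⟨⟨d, hd_mem⟩, Subtype.ext ?_⟩
  rw [AddSubgroup.coe_nsmul, mul_comm, mul_smul, hd, ← AddSubgroup.coe_nsmul, smul_comm, hs]

end pruferAddSubgroup

/-- If a Prüfer `q`-group `Q` acts on an abelian group `A`, acting trivially on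
`[A, Q]`, then for each `a ∈ A` the subgroup `[a, Q]` generated by
`{x • a - a | x ∈ Q}` is trivial or a divisible group all of whose elements have
`q`-power order. -/
theorem prufer_commutator_divisible (q : ℕ) (hq : q.Prime) (Q : Type*) [Group Q]
    (hQ : Nonempty (Q ≃* Multiplicative (pruferAddSubgroup q)))
    (A : Type*) [AddCommGroup A] [DistribMulAction Q A]
    (htriv : ∀ y : Q, ∀ b ∈ AddSubgroup.closure {b : A | ∃ (x : Q) (a : A), b = x • a - a},
      y • b = b)
    (a : A) :
    AddSubgroup.closure {b : A | ∃ x : Q, b = x • a - a} = ⊥ ∨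
      ((∀ b ∈ AddSubgroup.closure {b : A | ∃ x : Q, b = x • a - a}, ∀ n : ℕ, n ≠ 0 →
          ∃ c ∈ AddSubgroup.closure {b : A | ∃ x : Q, b = x • a - a}, n • c = b) ∧
        (∀ b ∈ AddSubgroup.closure {b : A | ∃ x : Q, b = x • a - a},
          ∃ m : ℕ, q ^ m • b = 0)) := by
  obtain ⟨e⟩ := hQ
  have h : ∀ x y : Q, x • (y • a - a) = y • a - a :=
    fun x y => htriv x _ (AddSubgroup.subset_closure ⟨y, a, rfl⟩)
  set f := (smulSubSelfHom a h).comp (MulEquiv.toAdditiveLeft e).symm.toAddMonoidHom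
  have hf : (smulSubSelfHom a h).range = f.range :=
    SetLike.coe_injective ((MulEquiv.toAdditiveLeft e).symm.surjective.range_comp _).symm
  rw [closure_smul_sub_self h, hf]
  refine Or.inr ⟨?_, ?_⟩
  · rintro _ ⟨p, rfl⟩ n hn
    obtain ⟨c, rfl⟩ := pruferAddSubgroup.exists_nsmul_eq hq p hn
    exact ⟨f c, ⟨c, rfl⟩, (map_nsmul f n c).symm⟩
  · rintro _ ⟨p, rfl⟩
    obtain ⟨m, hm⟩ := pruferAddSubgroup.exists_pow_nsmul_eq_zero p
    exact ⟨m, by rw [← map_nsmul, hm, map_zero]⟩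
end

section
/- Let A be a nonzero torsion-free abelian group containing a finitely generated subgroup B such that A/B is a torsion group of finite rank in which only finitely many primes occur. Then there exist infinitely many primes r with A ≠ rA. -/
/-- A nonzero torsion-free abelian group `A` containing a finitely generated subgroup
`B` such that `A/B` is torsion, of finite special rank, with only finitely many primes
occurring as orders, fails to be `r`-divisible for infinitely many primes `r`. -/
theorem infinitely_many_nondivisible_primes (A : Type*) [AddCommGroup A] [Nontrivial A]
    (htf : ∀ (n : ℕ) (a : A), n ≠ 0 → n • a = 0 → a = 0)
    (B : AddSubgroup A) (hB : B.FG)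
    (htor : ∀ x : A ⧸ B, ∃ n : ℕ, n ≠ 0 ∧ n • x = 0)
    (hrank : ∃ s : ℕ, ∀ S : AddSubgroup (A ⧸ B), S.FG →
      ∃ t : Finset (A ⧸ B), t.card ≤ s ∧ AddSubgroup.closure ↑t = S)
    (hprimes : ∃ P : Finset ℕ, ∀ r : ℕ, r.Prime → (∃ x : A ⧸ B, x ≠ 0 ∧ r • x = 0) → r ∈ P) :
    {r : ℕ | r.Prime ∧ ¬∀ a : A, ∃ b : A, r • b = a}.Infinite := by
  obtain ⟨P, hP⟩ := hprimes
  -- B contains a nonzero element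
  have hBne : ∃ b : A, b ∈ B ∧ b ≠ 0 := by
    by_contra h
    push_neg at h
    obtain ⟨a, ha⟩ := exists_ne (0 : A)
    obtain ⟨n, hn0, hna⟩ := htor (QuotientAddGroup.mk a)
    have : (QuotientAddGroup.mk (n • a) : A ⧸ B) = 0 := by
      simpa using hna
    have hmem : n • a ∈ B := (QuotientAddGroup.eq_zero_iff _).1 this
    have : n • a = 0 := h _ hmem
    exact ha (htf n a hn0 this)
  obtain ⟨b₀, hb₀B, hb₀⟩ := hBne
  -- B is a finite free ℤ-module
  haveI : AddGroup.FG ↥B := (AddGroup.fg_iff_addSubgroup_fg B).2 hB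
  haveI : Module.Finite ℤ ↥B := Module.Finite.iff_addGroup_fg.2 ‹_›
  haveI : NoZeroSMulDivisors ℤ ↥B := by
    refine ⟨fun {c x} hcx => ?_⟩
    by_cases hc : c = 0
    · exact Or.inl hc
    · refine Or.inr ?_
      have hA : c • (x : A) = 0 := by
        have := congrArg (Subtype.val) hcx
        simpa using this
      have hnat : (c.natAbs : ℕ) • (x : A) = 0 := by
        rcases Int.natAbs_eq c with h | h
        · have : ((c.natAbs : ℤ)) • (x : A) = 0 := by rw [← h]; exact hA
          simpa [natCast_zsmul] using this
        · have : ((c.natAbs : ℤ)) • (x : A) = 0 := by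
            rw [show ((c.natAbs : ℤ)) = -c by omega]
            simp [hA]
          simpa [natCast_zsmul] using this
      have : (x : A) = 0 := htf c.natAbs x (by simpa using hc) hnat
      exact Subtype.ext this
  haveI : Module.Free ℤ ↥B := Module.free_of_finite_type_torsion_free'
  set ι := Module.Free.ChooseBasisIndex ℤ ↥B
  set bb : Module.Basis ι ℤ ↥B := Module.Free.chooseBasis ℤ ↥B
  set m₀ : ↥B := ⟨b₀, hb₀B⟩
  have hm₀ : m₀ ≠ 0 := fun h => hb₀ (by simpa [m₀] using congrArg Subtype.val h)
  have hrepr : bb.repr m₀ ≠ 0 := by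
    simpa using (bb.repr.map_eq_zero_iff).not.2 hm₀
  obtain ⟨i, hi⟩ : ∃ i, bb.repr m₀ i ≠ 0 := by
    by_contra h
    push_neg at h
    exact hrepr (Finsupp.ext fun j => h j)
  set v : ℤ := bb.repr m₀ i
  -- The set of bad primes contains all primes outside P
  have hsub : {r : ℕ | r.Prime} \ ↑P ⊆ {r : ℕ | r.Prime ∧ ¬∀ a : A, ∃ b : A, r • b = a} := by
    rintro r ⟨hr, hrP⟩
    refine ⟨hr, fun hdiv => ?_⟩
    -- quotient has no r-torsion
    have hq : ∀ x : A ⧸ B, r • x = 0 → x = 0 := by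
      intro x hx
      by_contra hx0
      exact hrP (hP r hr ⟨x, hx0, hx⟩)
    have hqk : ∀ (k : ℕ) (x : A ⧸ B), r ^ k • x = 0 → x = 0 := by
      intro k
      induction k with
      | zero => intro x hx; simpa using hx
      | succ k ih =>
        intro x hx
        have : r ^ k • (r • x) = 0 := by
          rw [← mul_smul, ← pow_succ]; exact hx
        exact hq x (ih _ this)
    -- divide b₀ by r^k inside B
    have hdivk : ∀ k : ℕ, ∃ c : A, r ^ k • c = b₀ := by
      intro k
      induction k with
      | zero => exact ⟨b₀, by simp⟩
      | succ k ih =>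
        obtain ⟨c, hc⟩ := ih
        obtain ⟨d, hd⟩ := hdiv c
        exact ⟨d, by rw [pow_succ, mul_smul, hd, hc]⟩
    have hdivB : ∀ k : ℕ, ∃ c : A, c ∈ B ∧ r ^ k • c = b₀ := by
      intro k
      obtain ⟨c, hc⟩ := hdivk k
      refine ⟨c, ?_, hc⟩
      have : r ^ k • (QuotientAddGroup.mk c : A ⧸ B) = 0 := by
        have : (QuotientAddGroup.mk (r ^ k • c) : A ⧸ B) = QuotientAddGroup.mk b₀ := by
          rw [hc]
        have hb : (QuotientAddGroup.mk b₀ : A ⧸ B) = 0 :=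
          (QuotientAddGroup.eq_zero_iff _).2 hb₀B
        simpa [hb] using this
      exact (QuotientAddGroup.eq_zero_iff _).1 (hqk k _ this)
    -- conclude: r^k divides v for all k, contradiction
    have hdvd : ∀ k : ℕ, (r : ℤ) ^ k ∣ v := by
      intro k
      obtain ⟨c, hcB, hc⟩ := hdivB k
      set m₁ : ↥B := ⟨c, hcB⟩
      have hm : (r ^ k : ℕ) • m₁ = m₀ := by
        apply Subtype.ext
        simpa [m₁, m₀] using hc
      have : bb.repr m₀ i = (r ^ k : ℕ) • bb.repr m₁ i := by
        rw [← hm, map_nsmul]; rfl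
      refine ⟨bb.repr m₁ i, ?_⟩
      rw [show v = bb.repr m₀ i from rfl, this]
      push_cast
      ring
    set k := v.natAbs
    have hle : (r : ℤ) ^ k ≤ |v| := Int.le_of_dvd (abs_pos.2 hi) ((dvd_abs _ _).mpr (hdvd k))
    have h2 : (2 : ℤ) ^ k ≤ (r : ℤ) ^ k := by
      apply pow_le_pow_left₀ (by norm_num)
      exact_mod_cast hr.two_le
    have hlt : |v| < (2 : ℤ) ^ k := by
      have : (k : ℤ) < (2 : ℤ) ^ k := by exact_mod_cast (Nat.lt_two_pow_self (n := k))
      rwa [Int.abs_eq_natAbs]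
    omega
  exact (Nat.infinite_setOf_prime.diff P.finite_toSet).mono hsub
end
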